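/- arXiv:2309.14628 — 5 statements merged into one kernel-verified Lean document; each statement's English description precedes it below -/
import Mathlib

section
/- Let a_d = (5d)!/(d!)⁵ and b_d = a_d·(∑_{m=1}^{5d} 5/m − 5∑_{m=1}^{d} 1/m). Then both power series ∑_{d≥0} a_d q^d and ∑_{d≥1} b_d q^d converge for real q with 0 < q < 5⁻⁵, and the function I₁(q) := (∑_{d≥0} a_d q^d)·log q + ∑_{d≥1} b_d q^d satisfies the quintic Picard–Fuchs equation θ⁴I₁ = 5q(5θ+1)(5θ+2)(5θ+3)(5θ+4)I₁ on the interval (0, 5⁻⁵), where θ = q·d/dq. -/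
/-!
Write `F_c(q) = ∑ c_d qᵈ`. If `c` and `e` grow at most like `dᵏ 3125ᵈ`, then on `(0, 5⁻⁵)` the
function `F_c(q) log q + F_e(q)` can be differentiated term by term, and `θ` acts on it through its
coefficients: `θ(qᵈ) = d qᵈ` and `θ(qᵈ log q) = d qᵈ log q + qᵈ`. This class is stable under `θ`
and under `5θ + k`, so both sides of the Picard–Fuchs equation are again of this form, and since the
left side has no constant terms the equation becomes a pair of coefficient recurrences:
`(d+1)⁴ a_{d+1} = 5 (5d+1)(5d+2)(5d+3)(5d+4) a_d`, from the factorials, and its companion for `b`,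
from the harmonic sums; the latter is the derivative of the former in the index, as `b_d` is the
derivative at `ε = 0` of `Γ(5d+5ε+1)/Γ(d+ε+1)⁵`. The growth bound on `a` is `(5d)! ≤ 5⁵ᵈ (d!)⁵`.
-/

/-- The coefficients `a_d = (5d)!/(d!)⁵`. -/
noncomputable def a (d : ℕ) : ℝ :=
  (Nat.factorial (5 * d) : ℝ) / (Nat.factorial d : ℝ) ^ 5

/-- The coefficients `b_d = a_d · (∑_{m=1}^{5d} 5/m − 5∑_{m=1}^{d} 1/m)`.  Note `b 0 = 0`. -/
noncomputable def b (d : ℕ) : ℝ :=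
  a d * ((∑ m ∈ Finset.Icc 1 (5 * d), 5 / (m : ℝ)) - 5 * ∑ m ∈ Finset.Icc 1 d, 1 / (m : ℝ))

/-- The logarithmic derivative operator `θ = q·d/dq` on functions. -/
noncomputable def theta (f : ℝ → ℝ) : ℝ → ℝ := fun q => q * deriv f q

/-- The operator `5θ + c`. -/
noncomputable def A (c : ℝ) (f : ℝ → ℝ) : ℝ → ℝ := fun q => 5 * theta f q + c * f q

/-- `I₁(q) = (∑_{d≥0} a_d qᵈ)·log q + ∑_{d≥1} b_d qᵈ` (the sum over `d ≥ 1` agrees with the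
sum over all `d : ℕ` since `b 0 = 0`). -/
noncomputable def I1 : ℝ → ℝ := fun q =>
  (∑' d : ℕ, a d * q ^ d) * Real.log q + ∑' d : ℕ, b d * q ^ d

open Set Filter Asymptotics

lemma isBigO_natCast_pow_mul_pow_of_le (ρ : ℝ) {k l : ℕ} (hkl : k ≤ l) :
    (fun d : ℕ => (d : ℝ) ^ k * ρ ^ d) =O[atTop] fun d => (d : ℝ) ^ l * ρ ^ d := by
  refine IsBigO.mul (IsBigO.of_bound 1 ?_) (isBigO_refl _ _)
  filter_upwards [eventually_ge_atTop 1] with d hd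
  have hd' : (1 : ℝ) ≤ d := by exact_mod_cast hd
  simpa [abs_of_nonneg (by positivity : (0 : ℝ) ≤ (d : ℝ) ^ l)] using pow_le_pow_right₀ hd' hkl

def polyExpGrowth (ρ : ℝ) : Submodule ℝ (ℕ → ℝ) where
  carrier := {c | ∃ k : ℕ, c =O[atTop] fun d => (d : ℝ) ^ k * ρ ^ d}
  zero_mem' := ⟨0, isBigO_zero _ _⟩
  add_mem' := by
    rintro c e ⟨k, hc⟩ ⟨l, he⟩
    exact ⟨max k l, (hc.trans (isBigO_natCast_pow_mul_pow_of_le ρ (le_max_left k l))).add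
      (he.trans (isBigO_natCast_pow_mul_pow_of_le ρ (le_max_right k l)))⟩
  smul_mem' := by
    rintro r c ⟨k, hc⟩
    exact ⟨k, hc.const_smul_left r⟩

def degMul (c : ℕ → ℝ) : ℕ → ℝ := fun d => d * c d

noncomputable def powerSeriesSum (c : ℕ → ℝ) (q : ℝ) : ℝ := ∑' d, c d * q ^ d

section PowerSeries

variable {ρ : ℝ} {c e : ℕ → ℝ}

lemma degMul_mem_polyExpGrowth (hc : c ∈ polyExpGrowth ρ) : degMul c ∈ polyExpGrowth ρ := by
  obtain ⟨k, hc⟩ := hc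
  exact ⟨k + 1, ((isBigO_refl (fun d : ℕ => (d : ℝ)) atTop).mul hc).congr_right
    fun d => by ring⟩

lemma summable_norm_mul_pow_of_mem_polyExpGrowth (hc : c ∈ polyExpGrowth ρ) {y : ℝ}
    (hy : |ρ * y| < 1) : Summable fun d => ‖c d * y ^ d‖ := by
  obtain ⟨k, hc⟩ := hc
  refine summable_of_isBigO_nat (summable_pow_mul_geometric_of_norm_lt_one k hy) ?_
  exact (hc.mul (isBigO_refl (fun d => y ^ d) atTop)).norm_left.congr_right
    fun d => by rw [mul_pow]; ring

lemma summable_mul_pow_of_mem_Ioo (hc : c ∈ polyExpGrowth ρ) {q : ℝ} (hq : q ∈ Ioo 0 ρ⁻¹) :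
    Summable fun d => c d * q ^ d := by
  have hρ : 0 < ρ := inv_pos.mp (hq.1.trans hq.2)
  refine (summable_norm_mul_pow_of_mem_polyExpGrowth hc ?_).of_norm
  rw [abs_of_pos (mul_pos hρ hq.1), ← lt_div_iff₀' hρ, one_div]
  exact hq.2

lemma hasDerivAt_powerSeriesSum (hc : c ∈ polyExpGrowth ρ) (hρ : 0 < ρ) {q : ℝ}
    (hq : |q| < ρ⁻¹) :
    HasDerivAt (powerSeriesSum c) (∑' d, c d * (d * q ^ (d - 1))) q := by
  obtain ⟨s, hqs, hsρ⟩ := exists_between hq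
  have hs : 0 < s := (abs_nonneg q).trans_lt hqs
  have hρs : |ρ * s| < 1 := by
    rwa [abs_of_pos (by positivity), ← lt_div_iff₀' hρ, one_div]
  refine hasDerivAt_tsum_of_isPreconnected
    ((summable_norm_mul_pow_of_mem_polyExpGrowth (degMul_mem_polyExpGrowth hc) hρs).div_const s)
    Metric.isOpen_ball (convex_ball 0 s).isPreconnected
    (fun d y _ => (hasDerivAt_pow d y).const_mul (c d)) (fun d y hy => ?_)
    (by simpa using hqs) (summable_norm_mul_pow_of_mem_polyExpGrowth hc ?_).of_norm
    (by simpa using hqs)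
  · rw [mem_ball_zero_iff, Real.norm_eq_abs] at hy
    rcases d with _ | d
    · simp only [CharP.cast_eq_zero, zero_mul, mul_zero, norm_zero]
      positivity
    · simp only [degMul, Nat.add_sub_cancel, norm_mul, norm_pow, Real.norm_eq_abs, Nat.abs_cast,
        abs_of_pos hs]
      rw [pow_succ, ← mul_assoc, mul_div_assoc, mul_div_cancel_right₀ _ hs.ne',
        mul_comm (|c (d + 1)|)]
      gcongr
  · rw [abs_mul, abs_of_pos hρ, ← lt_div_iff₀' hρ, one_div]
    exact hq

lemma mul_tsum_mul_natCast_mul_pow_sub_one (c : ℕ → ℝ) (q : ℝ) :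
    q * ∑' d, c d * (d * q ^ (d - 1)) = powerSeriesSum (degMul c) q := by
  rw [powerSeriesSum, ← tsum_mul_left]
  congr 1 with (_ | d)
  · simp [degMul]
  · simp only [degMul, Nat.add_sub_cancel]
    ring

lemma powerSeriesSum_add {q : ℝ} (hc : Summable fun d => c d * q ^ d)
    (he : Summable fun d => e d * q ^ d) :
    powerSeriesSum (c + e) q = powerSeriesSum c q + powerSeriesSum e q := by
  simp only [powerSeriesSum, Pi.add_apply, add_mul]
  exact hc.tsum_add he

lemma powerSeriesSum_smul (r : ℝ) (c : ℕ → ℝ) (q : ℝ) :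
    powerSeriesSum (r • c) q = r * powerSeriesSum c q := by
  simp only [powerSeriesSum, Pi.smul_apply, smul_eq_mul, mul_assoc, tsum_mul_left]

lemma powerSeriesSum_eq_mul_of_zero {q : ℝ} (hc : Summable fun d => c d * q ^ d)
    (h0 : c 0 = 0) : powerSeriesSum c q = q * powerSeriesSum (fun d => c (d + 1)) q := by
  rw [powerSeriesSum, hc.tsum_eq_zero_add, h0, powerSeriesSum, ← tsum_mul_left]
  simp only [zero_mul, zero_add, pow_succ]
  congr 1 with d
  ring

end PowerSeries

abbrev polyExpGrowthPair (ρ : ℝ) : Submodule ℝ ((ℕ → ℝ) × (ℕ → ℝ)) :=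
  (polyExpGrowth ρ).prod (polyExpGrowth ρ)

noncomputable def logSeries (p : (ℕ → ℝ) × (ℕ → ℝ)) (q : ℝ) : ℝ :=
  powerSeriesSum p.1 q * Real.log q + powerSeriesSum p.2 q

def thetaCoeff (p : (ℕ → ℝ) × (ℕ → ℝ)) : (ℕ → ℝ) × (ℕ → ℝ) := (degMul p.1, p.1 + degMul p.2)

def ACoeff (k : ℝ) (p : (ℕ → ℝ) × (ℕ → ℝ)) : (ℕ → ℝ) × (ℕ → ℝ) :=
  (5 : ℝ) • thetaCoeff p + k • p

structure HasLogExpansion (ρ : ℝ) (f : ℝ → ℝ) (p : (ℕ → ℝ) × (ℕ → ℝ)) : Prop where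
  mem : p ∈ polyExpGrowthPair ρ
  eqOn : EqOn f (logSeries p) (Ioo 0 ρ⁻¹)

section LogSeries

variable {ρ : ℝ} {p r : (ℕ → ℝ) × (ℕ → ℝ)}

lemma thetaCoeff_iterate (n : ℕ) (p : (ℕ → ℝ) × (ℕ → ℝ)) :
    thetaCoeff^[n] p = (fun d : ℕ => (d : ℝ) ^ n * p.1 d,
      fun d : ℕ => (d : ℝ) ^ n * p.2 d + n * (d : ℝ) ^ (n - 1) * p.1 d) := by
  induction n with
  | zero => simp
  | succ n ih =>
    rw [Function.iterate_succ_apply', ih]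
    ext d
    · simp only [thetaCoeff, degMul]
      ring
    · simp only [thetaCoeff, degMul, Pi.add_apply]
      rcases n with _ | n
      · simp only [pow_zero, one_mul, CharP.cast_eq_zero, zero_mul, add_zero, zero_add]
        ring
      · push_cast
        ring

lemma thetaCoeff_mem (hp : p ∈ polyExpGrowthPair ρ) : thetaCoeff p ∈ polyExpGrowthPair ρ :=
  ⟨degMul_mem_polyExpGrowth hp.1, add_mem hp.1 (degMul_mem_polyExpGrowth hp.2)⟩

lemma ACoeff_mem (k : ℝ) (hp : p ∈ polyExpGrowthPair ρ) : ACoeff k p ∈ polyExpGrowthPair ρ :=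
  add_mem (Submodule.smul_mem _ _ (thetaCoeff_mem hp)) (Submodule.smul_mem _ _ hp)

lemma logSeries_add (hp : p ∈ polyExpGrowthPair ρ) (hr : r ∈ polyExpGrowthPair ρ) {q : ℝ}
    (hq : q ∈ Ioo 0 ρ⁻¹) :
    logSeries (p + r) q = logSeries p q + logSeries r q := by
  simp only [logSeries, Prod.fst_add, Prod.snd_add,
    powerSeriesSum_add (summable_mul_pow_of_mem_Ioo hp.1 hq) (summable_mul_pow_of_mem_Ioo hr.1 hq),
    powerSeriesSum_add (summable_mul_pow_of_mem_Ioo hp.2 hq) (summable_mul_pow_of_mem_Ioo hr.2 hq)]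
  ring

lemma logSeries_smul (t : ℝ) (p : (ℕ → ℝ) × (ℕ → ℝ)) (q : ℝ) :
    logSeries (t • p) q = t * logSeries p q := by
  simp only [logSeries, Prod.smul_fst, Prod.smul_snd, powerSeriesSum_smul]
  ring

lemma logSeries_eq_mul_of_zero (hp : p ∈ polyExpGrowthPair ρ) {q : ℝ}
    (hq : q ∈ Ioo 0 ρ⁻¹) (h₁ : p.1 0 = 0) (h₂ : p.2 0 = 0) :
    logSeries p q = q * logSeries (fun d => p.1 (d + 1), fun d => p.2 (d + 1)) q := by
  rw [logSeries, logSeries, powerSeriesSum_eq_mul_of_zero (summable_mul_pow_of_mem_Ioo hp.1 hq) h₁,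
    powerSeriesSum_eq_mul_of_zero (summable_mul_pow_of_mem_Ioo hp.2 hq) h₂]
  ring

lemma theta_logSeries (hp : p ∈ polyExpGrowthPair ρ) {q : ℝ}
    (hq : q ∈ Ioo 0 ρ⁻¹) : theta (logSeries p) q = logSeries (thetaCoeff p) q := by
  have hρ : 0 < ρ := inv_pos.mp (hq.1.trans hq.2)
  have hq' : |q| < ρ⁻¹ := by rw [abs_of_pos hq.1]; exact hq.2
  have hderiv : HasDerivAt (logSeries p) _ q := ((hasDerivAt_powerSeriesSum hp.1 hρ hq').mul
    (Real.hasDerivAt_log hq.1.ne')).add (hasDerivAt_powerSeriesSum hp.2 hρ hq')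
  rw [theta, hderiv.deriv, logSeries, thetaCoeff,
    powerSeriesSum_add (summable_mul_pow_of_mem_Ioo hp.1 hq)
      (summable_mul_pow_of_mem_Ioo (degMul_mem_polyExpGrowth hp.2) hq),
    ← mul_tsum_mul_natCast_mul_pow_sub_one, ← mul_tsum_mul_natCast_mul_pow_sub_one]
  field_simp [hq.1.ne']
  ring

variable {f : ℝ → ℝ}

lemma HasLogExpansion.theta (h : HasLogExpansion ρ f p) :
    HasLogExpansion ρ (theta f) (thetaCoeff p) := by
  refine ⟨thetaCoeff_mem h.mem, fun q hq => ?_⟩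
  have hfq : f =ᶠ[nhds q] logSeries p := eventuallyEq_of_mem (isOpen_Ioo.mem_nhds hq) h.eqOn
  rw [_root_.theta, hfq.deriv_eq, ← _root_.theta, theta_logSeries h.mem hq]

lemma HasLogExpansion.iterate_theta (h : HasLogExpansion ρ f p) (n : ℕ) :
    HasLogExpansion ρ (_root_.theta^[n] f) (thetaCoeff^[n] p) := by
  induction n with
  | zero => exact h
  | succ n ih =>
    rw [Function.iterate_succ_apply', Function.iterate_succ_apply']
    exact ih.theta

lemma HasLogExpansion.A (k : ℝ) (h : HasLogExpansion ρ f p) :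
    HasLogExpansion ρ (A k f) (ACoeff k p) := by
  refine ⟨ACoeff_mem k h.mem, fun q hq => ?_⟩
  rw [_root_.A, ACoeff, logSeries_add (Submodule.smul_mem _ _ (thetaCoeff_mem h.mem))
    (Submodule.smul_mem _ _ h.mem) hq, logSeries_smul, logSeries_smul, h.theta.eqOn hq,
    h.eqOn hq]

end LogSeries

theorem Nat.factorial_mul_le_pow_mul_factorial_pow (k d : ℕ) :
    (k * d).factorial ≤ k ^ (k * d) * d.factorial ^ k := by
  induction d with
  | zero => simp
  | succ d ih =>
    have hsplit := Nat.factorial_mul_descFactorial (n := k * (d + 1)) (k := k) (by nlinarith)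
    rw [show k * (d + 1) - k = k * d by rw [mul_add, mul_one, Nat.add_sub_cancel]] at hsplit
    rw [← hsplit, Nat.factorial_succ]
    calc (k * d).factorial * (k * (d + 1)).descFactorial k
        ≤ k ^ (k * d) * d.factorial ^ k * (k * (d + 1)) ^ k :=
          Nat.mul_le_mul ih (Nat.descFactorial_le_pow _ _)
      _ = k ^ (k * (d + 1)) * ((d + 1) * d.factorial) ^ k := by
          rw [mul_pow, mul_pow, mul_add, mul_one, pow_add]
          ring

lemma sum_Icc_div_natCast_le {r : ℝ} (hr : 0 ≤ r) (n : ℕ) :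
    ∑ m ∈ Finset.Icc 1 n, r / (m : ℝ) ≤ r * n := by
  calc ∑ m ∈ Finset.Icc 1 n, r / (m : ℝ) ≤ ∑ m ∈ Finset.Icc 1 n, r := by
        refine Finset.sum_le_sum fun m hm => div_le_self hr ?_
        exact_mod_cast (Finset.mem_Icc.mp hm).1
    _ = r * n := by simp [mul_comm]

lemma sum_Icc_five_mul_succ (f : ℕ → ℝ) (d : ℕ) :
    ∑ m ∈ Finset.Icc 1 (5 * (d + 1)), f m = ∑ m ∈ Finset.Icc 1 (5 * d), f m +
      (f (5 * d + 1) + f (5 * d + 2) + f (5 * d + 3) + f (5 * d + 4) + f (5 * d + 5)) := by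
  rw [show 5 * (d + 1) = 5 * d + 1 + 1 + 1 + 1 + 1 by ring]
  iterate 5 rw [Finset.sum_Icc_succ_top (by omega)]
  ring

lemma a_nonneg (d : ℕ) : 0 ≤ a d := by
  unfold a
  positivity

lemma a_le_pow (d : ℕ) : a d ≤ 3125 ^ d := by
  have h : (5 * d).factorial ≤ 3125 ^ d * d.factorial ^ 5 := by
    simpa [pow_mul] using Nat.factorial_mul_le_pow_mul_factorial_pow 5 d
  rw [a, div_le_iff₀ (by positivity)]
  exact_mod_cast h

lemma a_mem_polyExpGrowth : a ∈ polyExpGrowth 3125 :=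
  ⟨0, IsBigO.of_bound 1 (Eventually.of_forall fun d => by
    simpa [abs_of_nonneg (a_nonneg d)] using a_le_pow d)⟩

lemma b_mem_polyExpGrowth : b ∈ polyExpGrowth 3125 := by
  refine ⟨1, IsBigO.of_bound 30 (Eventually.of_forall fun d => ?_)⟩
  have hbracket : |(∑ m ∈ Finset.Icc 1 (5 * d), 5 / (m : ℝ)) -
      5 * ∑ m ∈ Finset.Icc 1 d, 1 / (m : ℝ)| ≤ 30 * d := by
    refine (abs_sub _ _).trans ?_
    rw [abs_of_nonneg (by positivity), abs_of_nonneg (by positivity)]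
    have h5 := sum_Icc_div_natCast_le (r := 5) (by norm_num) (5 * d)
    have h1 := sum_Icc_div_natCast_le (r := 1) (by norm_num) d
    push_cast at h5 h1
    linarith
  rw [Real.norm_eq_abs, Real.norm_eq_abs, b, abs_mul, abs_of_nonneg (a_nonneg d),
    abs_of_nonneg (by positivity : (0 : ℝ) ≤ (d : ℝ) ^ 1 * 3125 ^ d)]
  calc a d * _ ≤ 3125 ^ d * (30 * d) :=
        mul_le_mul (a_le_pow d) hbracket (abs_nonneg _) (by positivity)
    _ = 30 * ((d : ℝ) ^ 1 * 3125 ^ d) := by ring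

lemma a_succ (d : ℕ) : ((d : ℝ) + 1) ^ 4 * a (d + 1) =
    5 * ((5 * d + 1) * (5 * d + 2) * (5 * d + 3) * (5 * d + 4)) * a d := by
  rw [a, a, show 5 * (d + 1) = 5 * d + 4 + 1 by ring]
  simp only [Nat.factorial_succ]
  push_cast
  field_simp
  ring

lemma b_succ (d : ℕ) :
    ((d : ℝ) + 1) ^ 4 * b (d + 1) + 4 * ((d : ℝ) + 1) ^ 3 * a (d + 1) =
      5 * ((5 * d + 1) * (5 * d + 2) * (5 * d + 3) * (5 * d + 4) * b d +
        5 * ((5 * d + 2) * (5 * d + 3) * (5 * d + 4) + (5 * d + 1) * (5 * d + 3) * (5 * d + 4) +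
          (5 * d + 1) * (5 * d + 2) * (5 * d + 4) + (5 * d + 1) * (5 * d + 2) * (5 * d + 3)) *
          a d) := by
  have ha : a (d + 1) =
      5 * ((5 * d + 1) * (5 * d + 2) * (5 * d + 3) * (5 * d + 4)) * a d / ((d : ℝ) + 1) ^ 4 := by
    rw [eq_div_iff (by positivity), mul_comm, a_succ]
  rw [b, b, sum_Icc_five_mul_succ, Finset.sum_Icc_succ_top (by omega), ha]
  push_cast
  field_simp
  ring

lemma iterate_thetaCoeff_ab_zero :
    (thetaCoeff^[4] (a, b)).1 0 = 0 ∧ (thetaCoeff^[4] (a, b)).2 0 = 0 := by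
  simp [thetaCoeff_iterate]

lemma iterate_thetaCoeff_ab_succ :
    (fun d => (thetaCoeff^[4] (a, b)).1 (d + 1), fun d => (thetaCoeff^[4] (a, b)).2 (d + 1)) =
      (5 : ℝ) • ACoeff 1 (ACoeff 2 (ACoeff 3 (ACoeff 4 (a, b)))) := by
  simp only [thetaCoeff_iterate]
  ext d <;> simp only [ACoeff, thetaCoeff, degMul, Prod.smul_mk, Prod.mk_add_mk, smul_add,
    one_smul, Pi.add_apply, Pi.smul_apply, smul_eq_mul, Nat.cast_add, Nat.cast_one,
    Nat.cast_ofNat, Nat.add_one_sub_one]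
  · linear_combination a_succ d
  · linear_combination b_succ d

/-- Both series converge on `(0, 5⁻⁵)` and `I₁` satisfies the quintic Picard–Fuchs equation
`θ⁴ I₁ = 5q(5θ+1)(5θ+2)(5θ+3)(5θ+4) I₁` there. -/
theorem I1_satisfies_quintic_picard_fuchs :
    (∀ q : ℝ, 0 < q → q < (5 : ℝ) ^ (-5 : ℤ) →
      Summable (fun d : ℕ => a d * q ^ d) ∧ Summable (fun d : ℕ => b d * q ^ d)) ∧
    ∀ q ∈ Set.Ioo (0 : ℝ) ((5 : ℝ) ^ (-5 : ℤ)),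
      theta (theta (theta (theta I1))) q = 5 * q * A 1 (A 2 (A 3 (A 4 I1))) q := by
  have hab : (a, b) ∈ polyExpGrowthPair 3125 :=
    ⟨a_mem_polyExpGrowth, b_mem_polyExpGrowth⟩
  have hI1 : HasLogExpansion 3125 I1 (a, b) := ⟨hab, fun _ _ => rfl⟩
  rw [show (5 : ℝ) ^ (-5 : ℤ) = 3125⁻¹ by norm_num]
  refine ⟨fun q hq₀ hq => ⟨summable_mul_pow_of_mem_Ioo hab.1 ⟨hq₀, hq⟩,
    summable_mul_pow_of_mem_Ioo hab.2 ⟨hq₀, hq⟩⟩, fun q hq => ?_⟩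
  have hlhs := hI1.iterate_theta 4
  calc theta (theta (theta (theta I1))) q = logSeries (thetaCoeff^[4] (a, b)) q := hlhs.eqOn hq
    _ = q * logSeries ((5 : ℝ) • ACoeff 1 (ACoeff 2 (ACoeff 3 (ACoeff 4 (a, b))))) q := by
      rw [logSeries_eq_mul_of_zero hlhs.mem hq iterate_thetaCoeff_ab_zero.1
        iterate_thetaCoeff_ab_zero.2, iterate_thetaCoeff_ab_succ]
    _ = 5 * q * A 1 (A 2 (A 3 (A 4 I1))) q := by
      rw [logSeries_smul, ← ((((hI1.A 4).A 3).A 2).A 1).eqOn hq]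
      ring
end

section
/- For each k ∈ {0,1,2,3}, the formal power series J_k(t) = ∑_{m≥0} c_{k,m} t^{5m+k+1} ∈ ℚ[[t]], where c_{k,m} = (1/(5m+k)!)·∏_{j=0}^{m−1} ((k+1)/5 + j)⁵, satisfies the Landau–Ginzburg Picard–Fuchs equation t⁵·θ₋⁴ J_k = 5⁵·(θ₋−1)(θ₋−2)(θ₋−3)(θ₋−4) J_k, where θ₋ = t·d/dt. -/
/-- The logarithmic derivative operator `θ₋ = t·d/dt` on formal power series over `ℚ`:
`(θ₋ f)ₙ = n · fₙ`. -/
noncomputable def thetaMinus (f : PowerSeries ℚ) : PowerSeries ℚ :=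
  PowerSeries.mk fun n => (n : ℚ) * PowerSeries.coeff n f

/-- The coefficients `c_{k,m} = (1/(5m+k)!) · ∏_{j=0}^{m−1} ((k+1)/5 + j)⁵`. -/
noncomputable def c (k m : ℕ) : ℚ :=
  (1 / (Nat.factorial (5 * m + k) : ℚ)) *
    (∏ j ∈ Finset.range m, (((k : ℚ) + 1) / 5 + (j : ℚ))) ^ 5

/-- The Landau–Ginzburg I-function component
`J_k(t) = ∑_{m ≥ 0} c_{k,m} t^{5m+k+1}` (for `k ≤ 3`, the exponents `5m+k+1` are exactly
the `n` with `n % 5 = k + 1`, and then `m = n / 5`). -/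
noncomputable def J (k : ℕ) : PowerSeries ℚ :=
  PowerSeries.mk fun n => if n % 5 = k + 1 then c k (n / 5) else 0

/-- The operator `θ₋ − a`. -/
noncomputable def B (a : ℚ) (f : PowerSeries ℚ) : PowerSeries ℚ := thetaMinus f - a • f

/-!
Since `θ₋ tⁿ = n tⁿ`, every operator in the equation acts diagonally on monomials and
multiplication by `t⁵` shifts degrees by five, so the Picard–Fuchs equation for a series
`∑ aₙ tⁿ` amounts to the two-term recurrence `n⁴ aₙ = 5⁵ (n+1)(n+2)(n+3)(n+4) aₙ₊₅` together
with `(n−1)(n−2)(n−3)(n−4) aₙ = 0` for `n < 5`. For `J_k` the recurrence is the ratio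
`c_{k,m+1} / c_{k,m} = ((5m+k+1)/5)⁵ / ((5m+k+1)⋯(5m+k+5))`, and the only coefficient of `J_k`
in degree below five sits at `t^{k+1}`, which one of the factors `θ₋ − j` kills.
-/

open PowerSeries

lemma coeff_thetaMinus (n : ℕ) (f : PowerSeries ℚ) :
    coeff n (thetaMinus f) = n * coeff n f := by
  simp [thetaMinus]

lemma coeff_B (a : ℚ) (n : ℕ) (f : PowerSeries ℚ) :
    coeff n (B a f) = (n - a) * coeff n f := by
  simp only [B, map_sub, coeff_thetaMinus, coeff_smul, smul_eq_mul]
  ring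

lemma X_pow_five_mul_thetaMinus_four_eq_of_coeff {f : PowerSeries ℚ}
    (hlow : ∀ n : ℕ, n < 5 → ((n : ℚ) - 1) * (n - 2) * (n - 3) * (n - 4) * coeff n f = 0)
    (hrec : ∀ n : ℕ, (n : ℚ) ^ 4 * coeff n f =
      5 ^ 5 * ((n + 1) * (n + 2) * (n + 3) * (n + 4)) * coeff (n + 5) f) :
    X ^ 5 * thetaMinus (thetaMinus (thetaMinus (thetaMinus f))) =
      (5 : PowerSeries ℚ) ^ 5 * B 1 (B 2 (B 3 (B 4 f))) := by
  ext n
  rw [← map_ofNat C 5, ← map_pow, coeff_C_mul, mul_comm, coeff_mul_X_pow']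
  simp only [coeff_B, coeff_thetaMinus]
  rcases lt_or_ge n 5 with hn | hn
  · rw [if_neg (by omega)]
    linear_combination -(5 : ℚ) ^ 5 * hlow n hn
  · obtain ⟨d, rfl⟩ := Nat.exists_eq_add_of_le' hn
    rw [if_pos (by omega), Nat.add_sub_cancel]
    push_cast
    linear_combination hrec d

lemma c_recurrence (k m : ℕ) :
    ((5 * m + k + 1 : ℕ) : ℚ) ^ 4 * c k m =
      5 ^ 5 * ((5 * m + k + 2 : ℕ) * (5 * m + k + 3 : ℕ) * (5 * m + k + 4 : ℕ) *
        (5 * m + k + 5 : ℕ)) * c k (m + 1) := by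
  have hfac : (5 * (m + 1) + k).factorial =
      (5 * m + k + 5) * (5 * m + k + 4) * (5 * m + k + 3) * (5 * m + k + 2) *
        (5 * m + k + 1) * (5 * m + k).factorial := by
    rw [show 5 * (m + 1) + k = 5 * m + k + 5 by ring]
    simp only [Nat.factorial_succ]
    ring
  have hlast : ((k : ℚ) + 1) / 5 + m = (5 * m + k + 1) / 5 := by ring
  have hne : ((5 * m + k).factorial : ℚ) ≠ 0 := by positivity
  rw [c, c, hfac, Finset.prod_range_succ, hlast]
  push_cast
  field_simp

lemma coeff_J (k n : ℕ) : coeff n (J k) = if n % 5 = k + 1 then c k (n / 5) else 0 := by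
  simp [J]

lemma coeff_J_recurrence (k n : ℕ) :
    (n : ℚ) ^ 4 * coeff n (J k) =
      5 ^ 5 * ((n + 1) * (n + 2) * (n + 3) * (n + 4)) * coeff (n + 5) (J k) := by
  rw [coeff_J, coeff_J, Nat.add_mod_right, Nat.add_div_right _ (by norm_num)]
  split_ifs with h
  · obtain ⟨m, rfl⟩ : ∃ m, n = 5 * m + k + 1 := ⟨n / 5, by omega⟩
    rw [show (5 * m + k + 1) / 5 = m by omega]
    exact_mod_cast c_recurrence k m
  · simp

lemma coeff_J_of_lt_five (k : ℕ) {n : ℕ} (hn : n < 5) :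
    ((n : ℚ) - 1) * (n - 2) * (n - 3) * (n - 4) * coeff n (J k) = 0 := by
  rw [coeff_J]
  split_ifs with h
  · obtain rfl : n = k + 1 := by omega
    have hk : k < 4 := by omega
    interval_cases k <;> norm_num
  · simp

theorem Jk_satisfies_LG_picard_fuchs_general (k : ℕ) :
    PowerSeries.X ^ 5 * thetaMinus (thetaMinus (thetaMinus (thetaMinus (J k)))) =
      (5 : PowerSeries ℚ) ^ 5 * B 1 (B 2 (B 3 (B 4 (J k)))) :=
  X_pow_five_mul_thetaMinus_four_eq_of_coeff (fun _ hn => coeff_J_of_lt_five k hn)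
    (coeff_J_recurrence k)

/-- For `k ∈ {0,1,2,3}`, `J_k` satisfies the Landau–Ginzburg Picard–Fuchs equation
`t⁵·θ₋⁴ J_k = 5⁵·(θ₋−1)(θ₋−2)(θ₋−3)(θ₋−4) J_k`. -/
theorem Jk_satisfies_LG_picard_fuchs (k : ℕ) (hk : k ≤ 3) :
    PowerSeries.X ^ 5 * thetaMinus (thetaMinus (thetaMinus (thetaMinus (J k)))) =
      (5 : PowerSeries ℚ) ^ 5 * B 1 (B 2 (B 3 (B 4 (J k)))) :=
  Jk_satisfies_LG_picard_fuchs_general k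
end

section
/- For every complex number σ with σ ∉ ℤ, the following identity of complex numbers holds: (π²/2)·(Γ(σ+1/2)·Γ(1−5σ)·Γ(1/2−σ)/Γ(1−σ)⁵)·e^{iπ(−σ−1/2)} = −(1/(64π³))·Γ(σ)⁵·Γ(1−5σ)·Γ(σ+1/2)·Γ(1/2−σ)·e^{4πiσ}·(1−e^{−2πiσ})⁵, where Γ is the complex Gamma function. -/
/-!
Euler's reflection formula turns `1 / Γ(1 - σ)` into `sin(πσ) Γ(σ) / π`. With `t = e^{iπσ}`
the phase factor on the right is `t⁴ (1 - t⁻²)⁵ = t⁻¹ (t - t⁻¹)⁵ = 32 i sin⁵(πσ) t⁻¹`, and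
`e^{iπ(-σ-1/2)} = -i t⁻¹`, so both sides become `-(i / 2π³) sin⁵(πσ) Γ(σ)⁵ t⁻¹ Γ(σ+1/2) Γ(1-5σ) Γ(1/2-σ)`.
-/

open Complex
open scoped Real

namespace Complex

theorem inv_Gamma_one_sub {s : ℂ} (hs : Gamma s ≠ 0) :
    (Gamma (1 - s))⁻¹ = sin (π * s) * Gamma s / π := by
  rw [eq_div_of_mul_eq hs ((mul_comm _ _).trans (Gamma_mul_Gamma_one_sub s)), inv_div,
    div_div_eq_mul_div, mul_comm]

theorem exp_sub_pi_div_two_mul_I (z : ℂ) : exp ((z - π / 2) * I) = -I * exp (z * I) := by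
  rw [show (z - π / 2) * I = z * I + -π / 2 * I by ring, exp_add, exp_neg_pi_div_two_mul_I,
    mul_comm]

theorem one_sub_exp_neg_two_mul_I (z : ℂ) :
    1 - exp (-2 * z * I) = 2 * I * sin z * exp (-z * I) := by
  have hsq : exp (-2 * z * I) = exp (-z * I) ^ 2 := by rw [← exp_nat_mul]; ring_nf
  have hinv : exp (z * I) * exp (-z * I) = 1 := by rw [← exp_add]; simp
  rw [sin, hsq]
  linear_combination -hinv + (exp (z * I) * exp (-z * I) - exp (-z * I) ^ 2) * I_sq

theorem exp_four_mul_I_mul_one_sub_exp_neg_two_mul_I_pow_five (z : ℂ) :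
    exp (4 * z * I) * (1 - exp (-2 * z * I)) ^ 5 = 32 * I * sin z ^ 5 * exp (-z * I) := by
  have hshift : exp (4 * z * I) * exp (-z * I) ^ 5 = exp (-z * I) := by
    rw [← exp_nat_mul, ← exp_add]; ring_nf
  rw [one_sub_exp_neg_two_mul_I]
  linear_combination (32 * I ^ 5 * sin z ^ 5) * hshift
    + (32 * sin z ^ 5 * exp (-z * I) * I * (I ^ 2 - 1)) * I_sq

end Complex

/-- The reflection-formula rewriting of the integrand of Walcher's Mellin–Barnes
representation of the quintic disk potential as the hemisphere partition function
integrand of the extended quintic GLSM: for `σ ∉ ℤ`,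
`(π²/2)·(Γ(σ+1/2)Γ(1−5σ)Γ(1/2−σ)/Γ(1−σ)⁵)·e^{iπ(−σ−1/2)}
  = −(1/(64π³))·Γ(σ)⁵Γ(1−5σ)Γ(σ+1/2)Γ(1/2−σ)·e^{4πiσ}(1−e^{−2πiσ})⁵`. -/
theorem mellin_barnes_integrand_identity (σ : ℂ) (hσ : ∀ n : ℤ, σ ≠ (n : ℂ)) :
    ((Real.pi : ℂ) ^ 2 / 2) *
        (Complex.Gamma (σ + 1 / 2) * Complex.Gamma (1 - 5 * σ) * Complex.Gamma (1 / 2 - σ) /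
          Complex.Gamma (1 - σ) ^ 5) *
        Complex.exp (Complex.I * (Real.pi : ℂ) * (-σ - 1 / 2)) =
      -(1 / (64 * (Real.pi : ℂ) ^ 3)) *
        (Complex.Gamma σ ^ 5 * Complex.Gamma (1 - 5 * σ) * Complex.Gamma (σ + 1 / 2) *
          Complex.Gamma (1 / 2 - σ) * Complex.exp (4 * (Real.pi : ℂ) * Complex.I * σ) *
          (1 - Complex.exp (-2 * (Real.pi : ℂ) * Complex.I * σ)) ^ 5) := by
  have hΓ : Gamma σ ≠ 0 := Gamma_ne_zero fun m ↦ by simpa using hσ (-m)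
  rw [div_eq_mul_inv _ (Gamma (1 - σ) ^ 5), ← inv_pow, inv_Gamma_one_sub hΓ,
    show I * π * (-σ - 1 / 2) = (-(π * σ) - π / 2) * I by ring, exp_sub_pi_div_two_mul_I,
    show 4 * π * I * σ = 4 * (π * σ) * I by ring, show -2 * π * I * σ = -2 * (π * σ) * I by ring,
    mul_assoc _ (exp _), exp_four_mul_I_mul_one_sub_exp_neg_two_mul_I_pow_five]
  field_simp
  ring
end

section
/- For every natural number m, (−1)^m·Γ(−5m−3/2)·Γ(m+1/2)⁵ = 4π³·((2m+1)!!)⁵/((2m+1)⁵·(10m+3)!!), where Γ is the real Gamma function. -/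
/-!
Both Gamma values are explicit half-integer values: `Γ(m + 1/2) = (2m-1)‼ √π / 2^m`, and by the
reflection formula `Γ(1/2 - n) Γ(n + 1/2) = π / cos(π n) = (-1)^n π` one gets
`Γ(1/2 - n) = (-2)^n √π / (2n-1)‼`, used at `n = 5m + 2`. Multiplying out, the powers of `2`
cancel up to a factor `4`, the signs combine to `(-1)^(6m+2) = 1`, `√π⁶ = π³`, and
`(2m+1)‼ = (2m+1)(2m-1)‼` accounts for the factor `(2m+1)⁵` on the right.
-/

open Real
open scoped Nat

lemma Real.Gamma_half_sub_nat (n : ℕ) :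
    Gamma (1 / 2 - n) = (-2) ^ n * √π / (2 * n - 1 : ℕ)‼ := by
  have hsin : sin (π * (n + 1 / 2)) = (-1) ^ n := by
    rw [mul_add, mul_one_div, sin_add_pi_div_two, mul_comm, cos_nat_mul_pi]
  have reflection := Gamma_mul_Gamma_one_sub (n + 1 / 2)
  rw [hsin, show 1 - ((n : ℝ) + 1 / 2) = 1 / 2 - n by ring, mul_comm] at reflection
  have hsign : (-1 : ℝ) ^ n * (-1) ^ n = 1 := pow_mul_pow_eq_one n (by norm_num)
  have hsqrt : √π ^ 2 = π := sq_sqrt pi_pos.le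
  rw [eq_div_of_mul_eq (by positivity) reflection, Gamma_nat_add_half,
    show (-2 : ℝ) ^ n = (-1) ^ n * 2 ^ n by rw [← mul_pow]; norm_num]
  field_simp
  linear_combination (-√π ^ 2) * hsign - hsqrt

lemma Real.Gamma_neg_five_mul_nat_sub_three_halves (m : ℕ) :
    Gamma (-5 * m - 3 / 2) = (-2) ^ (5 * m + 2) * √π / (10 * m + 3)‼ := by
  rw [show 10 * m + 3 = 2 * (5 * m + 2) - 1 by omega]
  convert Gamma_half_sub_nat (5 * m + 2) using 2
  push_cast
  ring

lemma neg_one_pow_mul_neg_two_pow_five_mul_add_two (m : ℕ) :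
    (-1 : ℝ) ^ m * (-2) ^ (5 * m + 2) = 4 * (2 ^ m) ^ 5 := by
  rw [show (-2 : ℝ) = -1 * 2 by norm_num, mul_pow, ← mul_assoc, ← pow_add,
    Even.neg_one_pow ⟨3 * m + 1, by ring⟩]
  ring

/-- The coefficient identity for the Coulomb-branch expansion of the extended-GLSM mirror
period in the Landau–Ginzburg phase:
`(−1)^m·Γ(−5m−3/2)·Γ(m+1/2)⁵ = 4π³·((2m+1)!!)⁵/((2m+1)⁵·(10m+3)!!)`. -/
theorem gamma_coefficient_LG_phase (m : ℕ) :
    (-1 : ℝ) ^ m * Real.Gamma (-5 * m - 3 / 2) * Real.Gamma ((m : ℝ) + 1 / 2) ^ 5 =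
      4 * Real.pi ^ 3 *
        ((Nat.doubleFactorial (2 * m + 1) : ℝ) ^ 5 /
          (((2 * m + 1 : ℕ) : ℝ) ^ 5 * (Nat.doubleFactorial (10 * m + 3) : ℝ))) := by
  have hodd : (2 * m + 1)‼ = (2 * m + 1) * (2 * m - 1)‼ := by
    simpa using Nat.doubleFactorial_add_one (2 * m)
  have hsqrt : √π ^ 6 = π ^ 3 := by rw [show 6 = 2 * 3 by rfl, pow_mul, sq_sqrt pi_pos.le]
  rw [Gamma_neg_five_mul_nat_sub_three_halves, Gamma_nat_add_half, hodd, mul_div_assoc,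
    mul_div_assoc, ← mul_assoc, neg_one_pow_mul_neg_two_pow_five_mul_add_two]
  field_simp
  rw [hsqrt]
  push_cast
  ring
end

section
/- The radius of convergence of the complex power series ∑_{m≥0} c_m·t^{5m+1}, where c_m = (1/(5m)!)·∏_{j=0}^{m−1}(1/5+j)⁵, is exactly 5. -/
/-! Ratio test. Writing `c m` for the coefficient, `c (m+1) / c m = ∏_{i=1}^{5} (m + 1/5) / (5m + i)`
tends to `5⁻⁵`, so consecutive terms of the series have norm ratio tending to `(‖t‖/5)⁵`, which is
`< 1` exactly when `‖t‖ < 5`. -/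

open Filter Topology Finset

section LacunaryRatioTest

variable {𝕜 : Type*} [NormedDivisionRing 𝕜] (a : ℕ → 𝕜) {t : 𝕜} {k r : ℕ} {L : ℝ}

theorem norm_mul_pow_succ_div_norm_mul_pow (ht : t ≠ 0) (m : ℕ) :
    ‖a (m + 1) * t ^ (k * (m + 1) + r)‖ / ‖a m * t ^ (k * m + r)‖ =
      ‖a (m + 1)‖ / ‖a m‖ * ‖t‖ ^ k := by
  have htm : ‖t‖ ^ (k * m + r) ≠ 0 := pow_ne_zero _ (norm_ne_zero_iff.mpr ht)
  rw [norm_mul, norm_mul, norm_pow, norm_pow, show k * (m + 1) + r = k * m + r + k by ring,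
    pow_add]
  field_simp

theorem tendsto_norm_ratio_mul_pow (ht : t ≠ 0)
    (ha : Tendsto (fun m ↦ ‖a (m + 1)‖ / ‖a m‖) atTop (𝓝 L)) :
    Tendsto (fun m ↦ ‖a (m + 1) * t ^ (k * (m + 1) + r)‖ / ‖a m * t ^ (k * m + r)‖) atTop
      (𝓝 (L * ‖t‖ ^ k)) := by
  simpa only [norm_mul_pow_succ_div_norm_mul_pow a ht] using ha.mul_const (‖t‖ ^ k)

theorem summable_mul_pow_of_tendsto_norm_ratio [CompleteSpace 𝕜] (hk : 0 < k)
    (ha₀ : ∀ m, a m ≠ 0) (ha : Tendsto (fun m ↦ ‖a (m + 1)‖ / ‖a m‖) atTop (𝓝 L))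
    (hLt : L * ‖t‖ ^ k < 1) : Summable fun m ↦ a m * t ^ (k * m + r) := by
  rcases eq_or_ne t 0 with rfl | ht
  · refine summable_of_ne_finset_zero (s := {0}) fun m hm ↦ ?_
    have : k * m + r ≠ 0 := by simp only [mem_singleton] at hm; positivity
    simp [zero_pow this]
  · exact summable_of_ratio_test_tendsto_lt_one hLt
      (.of_forall fun m ↦ mul_ne_zero (ha₀ m) (pow_ne_zero _ ht))
      (tendsto_norm_ratio_mul_pow a ht ha)

theorem not_summable_mul_pow_of_tendsto_norm_ratio (hk : 0 < k)
    (ha : Tendsto (fun m ↦ ‖a (m + 1)‖ / ‖a m‖) atTop (𝓝 L))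
    (hLt : 1 < L * ‖t‖ ^ k) : ¬ Summable fun m ↦ a m * t ^ (k * m + r) := by
  have ht : t ≠ 0 := by
    rintro rfl
    norm_num [zero_pow hk.ne'] at hLt
  exact not_summable_of_ratio_test_tendsto_gt_one hLt (tendsto_norm_ratio_mul_pow a ht ha)

end LacunaryRatioTest

theorem tendsto_natCast_add_div_mul_add (a c : ℝ) {b : ℝ} (hb : b ≠ 0) :
    Tendsto (fun n : ℕ ↦ ((n : ℝ) + a) / (b * n + c)) atTop (𝓝 (1 / b)) := by
  have h := ((tendsto_const_div_atTop_nhds_zero_nat a).const_add 1).div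
    ((tendsto_const_div_atTop_nhds_zero_nat c).const_add b) (by simpa using hb)
  rw [add_zero, add_zero] at h
  refine h.congr' ?_
  filter_upwards [eventually_ne_atTop 0] with n hn
  have hn : (n : ℝ) ≠ 0 := Nat.cast_ne_zero.mpr hn
  rw [Pi.div_apply]
  field_simp

noncomputable def lgCoeff (m : ℕ) : ℝ :=
  (∏ j ∈ range m, ((1 : ℝ) / 5 + j)) ^ 5 / (5 * m).factorial

theorem lgCoeff_pos (m : ℕ) : 0 < lgCoeff m := by
  have : 0 < ∏ j ∈ range m, ((1 : ℝ) / 5 + j) := prod_pos fun j _ ↦ by positivity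
  unfold lgCoeff
  positivity

theorem Nat.cast_factorial_add {R : Type*} [CommSemiring R] (n k : ℕ) :
    ((n + k).factorial : R) = n.factorial * ∏ i ∈ range k, ((n : R) + (i + 1)) := by
  rw [← Nat.factorial_mul_ascFactorial, Nat.ascFactorial_eq_prod_range]
  push_cast
  simp only [add_assoc, add_comm (1 : R)]

theorem lgCoeff_succ (m : ℕ) :
    lgCoeff (m + 1) = lgCoeff m * ∏ i ∈ range 5, (((m : ℝ) + 1 / 5) / (5 * m + (i + 1))) := by
  rw [lgCoeff, lgCoeff, prod_range_succ, show 5 * (m + 1) = 5 * m + 5 by ring,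
    Nat.cast_factorial_add, Nat.cast_mul, Nat.cast_ofNat, prod_div_distrib, prod_const,
    card_range]
  have : ∏ i ∈ range 5, (5 * (m : ℝ) + (i + 1)) ≠ 0 := prod_ne_zero_iff.mpr fun i _ ↦ by positivity
  field_simp
  ring

theorem tendsto_lgCoeff_succ_div :
    Tendsto (fun m ↦ lgCoeff (m + 1) / lgCoeff m) atTop (𝓝 ((1 / 5) ^ 5)) := by
  have h := tendsto_finsetProd (range 5) fun (i : ℕ) _ ↦
    tendsto_natCast_add_div_mul_add (1 / 5) ((i : ℝ) + 1) (b := 5) (by norm_num)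
  rw [prod_const, card_range] at h
  refine h.congr fun m ↦ ?_
  rw [lgCoeff_succ, mul_div_cancel_left₀ _ (lgCoeff_pos m).ne']

/-- The radius of convergence of `∑_{m ≥ 0} c_m t^{5m+1}` with
`c_m = (1/(5m)!)·∏_{j=0}^{m−1}(1/5+j)⁵` is exactly `5`:
the series converges for `‖t‖ < 5` and diverges for `‖t‖ > 5`. -/
theorem I0LG_radius_of_convergence :
    (∀ t : ℂ, ‖t‖ < 5 →
      Summable fun m : ℕ =>
        (1 / (Nat.factorial (5 * m) : ℂ)) *
          (∏ j ∈ Finset.range m, ((1 : ℂ) / 5 + (j : ℂ))) ^ 5 * t ^ (5 * m + 1)) ∧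
    (∀ t : ℂ, 5 < ‖t‖ →
      ¬ Summable fun m : ℕ =>
        (1 / (Nat.factorial (5 * m) : ℂ)) *
          (∏ j ∈ Finset.range m, ((1 : ℂ) / 5 + (j : ℂ))) ^ 5 * t ^ (5 * m + 1)) := by
  have hcoeff (m : ℕ) : (1 / (Nat.factorial (5 * m) : ℂ)) *
      (∏ j ∈ Finset.range m, ((1 : ℂ) / 5 + (j : ℂ))) ^ 5 = (lgCoeff m : ℂ) := by
    rw [lgCoeff]; push_cast; ring
  have hratio : Tendsto (fun m ↦ ‖(lgCoeff (m + 1) : ℂ)‖ / ‖(lgCoeff m : ℂ)‖) atTop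
      (𝓝 ((1 / 5) ^ 5)) := by
    simpa only [Complex.norm_of_nonneg (lgCoeff_pos _).le] using tendsto_lgCoeff_succ_div
  have hL (t : ℂ) : (1 / 5) ^ 5 * ‖t‖ ^ 5 = (‖t‖ / 5) ^ 5 := by ring
  simp_rw [hcoeff]
  refine ⟨fun t ht ↦ ?_, fun t ht ↦ ?_⟩
  · refine summable_mul_pow_of_tendsto_norm_ratio _ (by norm_num)
      (fun m ↦ Complex.ofReal_ne_zero.mpr (lgCoeff_pos m).ne') hratio ?_
    rw [hL]
    exact pow_lt_one₀ (by positivity) (by linarith) (by norm_num)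
  · refine not_summable_mul_pow_of_tendsto_norm_ratio _ (by norm_num) hratio ?_
    rw [hL]
    exact one_lt_pow₀ (by linarith) (by norm_num)
end
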